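/- Let G be a GSOS language with init(closed(Σ_G)) = 2^Act, and let G' be any disjoint extension of G. Then for all initial transition formulae F and F' over variables and actions in Act, ⊨_G F ⇒ F' holds if and only if ⊨_{G'} F ⇒ F' holds. -/

import Mathlib

/-!
Common infrastructure for formalizing results about GSOS languages
("A rule-matching bisimulation method", Aceto et al.).

* Variables are natural numbers (a countably infinite set).
* Terms over a signature given by a type `Op` of operation symbols with
  arities `ar : Op → ℕ`.
* GSOS rules and ruloids, the induced (sound and supported) transition
  relation, bisimilarity, ruloid systems, valid ruloids, initial transition
  formulae and rule-matching bisimulation.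
-/

namespace GSOSPaper

/-- Terms over operation symbols `Op` with arity function `ar`;
variables are natural numbers. -/
inductive Tm (Op : Type) (ar : Op → ℕ) : Type
  | var : ℕ → Tm Op ar
  | app : (f : Op) → (Fin (ar f) → Tm Op ar) → Tm Op ar

namespace Tm

variable {Op : Type} {ar : Op → ℕ}

/-- The set of variables occurring in a term. -/
def vars : Tm Op ar → Set ℕ
  | .var x => {x}
  | .app _ ts => ⋃ i, (ts i).vars

/-- The set of operation symbols occurring in a term. -/
def ops : Tm Op ar → Set Op
  | .var _ => ∅
  | .app f ts => insert f (⋃ i, (ts i).ops)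

/-- A term is closed if it contains no variables. -/
def IsClosed (t : Tm Op ar) : Prop := t.vars = ∅

/-- Applying a substitution to a term. -/
def subst (σ : ℕ → Tm Op ar) : Tm Op ar → Tm Op ar
  | .var x => σ x
  | .app f ts => .app f fun i => (ts i).subst σ

/-- Renaming the variables of a term. -/
def rename (r : ℕ → ℕ) (t : Tm Op ar) : Tm Op ar :=
  t.subst fun x => .var (r x)

/-- The number of occurrences of the variable `v` in a term. -/
def count (v : ℕ) : Tm Op ar → ℕ
  | .var x => if x = v then 1 else 0
  | .app _ ts => ∑ i, (ts i).count v

/-- Transporting a term along an arity-preserving map of operation symbols. -/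
def map {Op' : Type} {ar' : Op' → ℕ} (ι : Op → Op') (h : ∀ f, ar' (ι f) = ar f) :
    Tm Op ar → Tm Op' ar'
  | .var x => .var x
  | .app f ts => .app (ι f) fun i => (ts (Fin.cast (h f) i)).map ι h

end Tm

/-- A closed `S`-substitution: every variable is sent to a closed term all of
whose operation symbols come from `S`. -/
def ClosedSub {Op : Type} {ar : Op → ℕ} (S : Set Op) (σ : ℕ → Tm Op ar) : Prop :=
  ∀ x, (σ x).IsClosed ∧ (σ x).ops ⊆ S

/-- A rule (this data type is used both for GSOS rules and for ruloids):
positive premises `x →^a y` (coded as `(x, a, y)`), negative premises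
`x ↛^a` (coded as `(x, a)`), a source term, an action, and a target term. -/
structure Rule (Op : Type) (ar : Op → ℕ) (Act : Type) where
  pos : Set (ℕ × Act × ℕ)
  neg : Set (ℕ × Act)
  src : Tm Op ar
  act : Act
  tgt : Tm Op ar

namespace Rule

variable {Op : Type} {ar : Op → ℕ} {Act : Type}

/-- The source variables of a rule/ruloid: the variables of its source. -/
def sourceVars (ρ : Rule Op ar Act) : Set ℕ := ρ.src.vars

/-- The target variables of a rule/ruloid: the right-hand sides of its
positive premises. -/
def targetVars (ρ : Rule Op ar Act) : Set ℕ := {y | ∃ x a, (x, a, y) ∈ ρ.pos}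

/-- Well-formedness of a rule/ruloid: finitely many premises; the left-hand
sides of premises are source variables; the target variables are distinct
from the source variables and pairwise distinct (each target variable occurs
in exactly one positive premise); the variables of the target of the
conclusion occur among the source and target variables. -/
def WF (ρ : Rule Op ar Act) : Prop :=
  ρ.pos.Finite ∧ ρ.neg.Finite ∧
  (∀ ⦃x a y⦄, (x, a, y) ∈ ρ.pos → x ∈ ρ.sourceVars ∧ y ∉ ρ.sourceVars) ∧
  (∀ ⦃x a⦄, (x, a) ∈ ρ.neg → x ∈ ρ.sourceVars) ∧
  (∀ ⦃x a y x' a'⦄, (x, a, y) ∈ ρ.pos → (x', a', y) ∈ ρ.pos → x = x' ∧ a = a') ∧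
  ρ.tgt.vars ⊆ ρ.sourceVars ∪ ρ.targetVars

/-- A rule is in GSOS format if it is well formed and its source is
`f(x₁, …, x_l)` for an operation symbol `f` and distinct variables `x_i`. -/
def IsGSOSForm (ρ : Rule Op ar Act) : Prop :=
  ρ.WF ∧ ∃ (f : Op) (x : Fin (ar f) → ℕ), Function.Injective x ∧
    ρ.src = Tm.app f fun i => Tm.var (x i)

/-- A rule is a de Simone rule if it has no negative premises, at most one
positive premise per source variable, a target in which every variable occurs
at most once, and a target containing no source variable that occurs in a
positive premise. -/
def IsDeSimone (ρ : Rule Op ar Act) : Prop :=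
  ρ.neg = ∅ ∧
  (∀ ⦃x a y a' y'⦄, (x, a, y) ∈ ρ.pos → (x, a', y') ∈ ρ.pos → a = a' ∧ y = y') ∧
  (∀ v, ρ.tgt.count v ≤ 1) ∧
  (∀ ⦃x a y⦄, (x, a, y) ∈ ρ.pos → x ∉ ρ.tgt.vars)

/-- `ρ` has principal operation `f`. -/
def PrincipalIs (ρ : Rule Op ar Act) (f : Op) : Prop := ∃ ts, ρ.src = Tm.app f ts

/-- A rule is non-inheriting if no source variable occurs in the target of
its conclusion. -/
def NonInheriting (ρ : Rule Op ar Act) : Prop := ∀ x ∈ ρ.sourceVars, x ∉ ρ.tgt.vars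

/-- Renaming the variables of a rule/ruloid. -/
def rename (r : ℕ → ℕ) (ρ : Rule Op ar Act) : Rule Op ar Act where
  pos := (fun p : ℕ × Act × ℕ => (r p.1, p.2.1, r p.2.2)) '' ρ.pos
  neg := (fun p : ℕ × Act => (r p.1, p.2)) '' ρ.neg
  src := ρ.src.rename r
  act := ρ.act
  tgt := ρ.tgt.rename r

/-- Transporting a rule along an arity-preserving map of operation symbols. -/
def map {Op' : Type} {ar' : Op' → ℕ} (ι : Op → Op') (h : ∀ f, ar' (ι f) = ar f)
    (ρ : Rule Op ar Act) : Rule Op' ar' Act where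
  pos := ρ.pos
  neg := ρ.neg
  src := ρ.src.map ι h
  act := ρ.act
  tgt := ρ.tgt.map ι h

end Rule

/-- A language: a set of operation symbols together with a set of rules.
(Well-formedness is the separate predicate `Lang.WellFormed`.) -/
structure Lang (Op : Type) (ar : Op → ℕ) (Act : Type) where
  ops : Set Op
  rules : Set (Rule Op ar Act)

/-- A GSOS language: finitely many operations, finitely many rules, and all
rules in GSOS format over the signature. -/
def Lang.WellFormed {Op : Type} {ar : Op → ℕ} {Act : Type} (L : Lang Op ar Act) : Prop :=
  L.ops.Finite ∧ L.rules.Finite ∧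
  ∀ ρ ∈ L.rules, ρ.IsGSOSForm ∧ ρ.src.ops ⊆ L.ops ∧ ρ.tgt.ops ⊆ L.ops

variable {Op : Type} {ar : Op → ℕ} {Act : Type}

/-- `σ` satisfies the antecedents of `ρ` with respect to the transition
relation `Tr`. -/
def Satisfies (Tr : Tm Op ar → Act → Tm Op ar → Prop) (σ : ℕ → Tm Op ar)
    (ρ : Rule Op ar Act) : Prop :=
  (∀ ⦃x a y⦄, (x, a, y) ∈ ρ.pos → Tr (σ x) a (σ y)) ∧
  (∀ ⦃x a⦄, (x, a) ∈ ρ.neg → ∀ q, ¬ Tr (σ x) a q)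

/-- A rule/ruloid is sound for `Tr` (relative to closed `S`-substitutions) if
every closed substitution satisfying its antecedents yields an instance of
its conclusion that is in `Tr`. -/
def Rule.Sound (Tr : Tm Op ar → Act → Tm Op ar → Prop) (S : Set Op)
    (ρ : Rule Op ar Act) : Prop :=
  ∀ σ, ClosedSub S σ → Satisfies Tr σ ρ →
    Tr (ρ.src.subst σ) ρ.act (ρ.tgt.subst σ)

/-- The rule/ruloid `ρ` supports the transition `p →^a q`. -/
def Supports (Tr : Tm Op ar → Act → Tm Op ar → Prop) (S : Set Op)
    (ρ : Rule Op ar Act) (p : Tm Op ar) (a : Act) (q : Tm Op ar) : Prop :=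
  ∃ σ, ClosedSub S σ ∧ Satisfies Tr σ ρ ∧
    ρ.src.subst σ = p ∧ ρ.act = a ∧ ρ.tgt.subst σ = q

/-- `Tr` is the transition relation induced by the language `L`: it is sound
(every rule instance with satisfied antecedents is a transition) and
supported (every transition is supported by some rule of `L`).  For a GSOS
language there is a unique such relation. -/
def IsTransRel (L : Lang Op ar Act) (Tr : Tm Op ar → Act → Tm Op ar → Prop) : Prop :=
  (∀ ρ ∈ L.rules, ρ.Sound Tr L.ops) ∧
  (∀ p a q, Tr p a q → ∃ ρ ∈ L.rules, Supports Tr L.ops ρ p a q)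

/-- A rule is junk if it supports no transition. -/
def IsJunk (L : Lang Op ar Act) (Tr : Tm Op ar → Act → Tm Op ar → Prop)
    (ρ : Rule Op ar Act) : Prop :=
  ∀ p a q, ¬ Supports Tr L.ops ρ p a q

/-- `R` is a bisimulation with respect to `Tr`. -/
def IsBisim (Tr : Tm Op ar → Act → Tm Op ar → Prop)
    (R : Tm Op ar → Tm Op ar → Prop) : Prop :=
  Symmetric R ∧ ∀ p q, R p q → ∀ a p', Tr p a p' → ∃ q', Tr q a q' ∧ R p' q'

/-- Bisimilarity with respect to `Tr`. -/
def Bisim (Tr : Tm Op ar → Act → Tm Op ar → Prop) (p q : Tm Op ar) : Prop :=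
  ∃ R, IsBisim Tr R ∧ R p q

/-- `ρ` is a ruloid for the context `D` (over the operations `S`). -/
def IsRuloidFor (S : Set Op) (ρ : Rule Op ar Act) (D : Tm Op ar) : Prop :=
  ρ.WF ∧ ρ.src = D ∧ ρ.tgt.ops ⊆ S

/-- A set `R` of ruloids is supporting for the context `D` and the action `c`:
whenever a closed instance of `D` has a `c`-transition, that transition is an
instance of the conclusion of a ruloid of `R` under a closed substitution
satisfying its antecedents. -/
def SupportingFor (Tr : Tm Op ar → Act → Tm Op ar → Prop) (S : Set Op)
    (R : Set (Rule Op ar Act)) (D : Tm Op ar) (c : Act) : Prop :=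
  ∀ σ₀ q, ClosedSub S σ₀ → Tr (D.subst σ₀) c q →
    ∃ ρ ∈ R, ∃ σ, ClosedSub S σ ∧ Satisfies Tr σ ρ ∧
      ρ.src.subst σ = D.subst σ₀ ∧ ρ.act = c ∧ ρ.tgt.subst σ = q

/-- `rul` assigns to each term `P` a finite set `rul P` of ruloids for `P`
that is sound and supporting for `P` and each action (such an assignment
exists by the Ruloid Theorem). -/
def IsRuloidSystem (L : Lang Op ar Act) (Tr : Tm Op ar → Act → Tm Op ar → Prop)
    (rul : Tm Op ar → Set (Rule Op ar Act)) : Prop :=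
  ∀ P : Tm Op ar,
    (rul P).Finite ∧
    (∀ ρ ∈ rul P, IsRuloidFor L.ops ρ P) ∧
    (∀ ρ ∈ rul P, ρ.Sound Tr L.ops) ∧
    (∀ c : Act, SupportingFor Tr L.ops {ρ | ρ ∈ rul P ∧ ρ.act = c} P c)

/-- The ruloid system `rul` is junk-free: every ruloid in it supports some
transition, i.e. its antecedents are satisfiable by a closed substitution. -/
def JunkFree (L : Lang Op ar Act) (Tr : Tm Op ar → Act → Tm Op ar → Prop)
    (rul : Tm Op ar → Set (Rule Op ar Act)) : Prop :=
  ∀ P, ∀ ρ ∈ rul P, ∃ σ, ClosedSub L.ops σ ∧ Satisfies Tr σ ρ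

/-- `ρ` is a valid ruloid for `P`: it is obtained from a ruloid `ρ' ∈ rul P`
by an injective renaming of its target variables to variables that are not
among the source variables of `ρ`. -/
def IsValidRuloid (rul : Tm Op ar → Set (Rule Op ar Act)) (P : Tm Op ar)
    (ρ : Rule Op ar Act) : Prop :=
  ∃ ρ' ∈ rul P, ∃ r : ℕ → ℕ,
    (∀ x, x ∉ ρ'.targetVars → r x = x) ∧
    Set.InjOn r ρ'.targetVars ∧
    (∀ y ∈ ρ'.targetVars, r y ∉ ρ.sourceVars) ∧
    ρ = ρ'.rename r

/-- `σ` satisfies `hyps(ρ)`, the conjunction of the initial transition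
formulae corresponding to the antecedents of `ρ` (the atom `x →^a` for a
positive premise `x →^a y`, and its negation for a negative premise). -/
def HypsSat (Tr : Tm Op ar → Act → Tm Op ar → Prop) (σ : ℕ → Tm Op ar)
    (ρ : Rule Op ar Act) : Prop :=
  (∀ ⦃x a y⦄, (x, a, y) ∈ ρ.pos → ∃ q, Tr (σ x) a q) ∧
  (∀ ⦃x a⦄, (x, a) ∈ ρ.neg → ∀ q, ¬ Tr (σ x) a q)

/-- `R` is a rule-matching bisimulation (Definition 5.1). -/
def IsRMBisim (L : Lang Op ar Act) (Tr : Tm Op ar → Act → Tm Op ar → Prop)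
    (rul : Tm Op ar → Set (Rule Op ar Act))
    (R : Tm Op ar → Tm Op ar → Prop) : Prop :=
  Symmetric R ∧
  ∀ P Q, R P Q → ∀ ρ ∈ rul P,
    ∃ J : Set (Rule Op ar Act), J.Finite ∧
      (∀ ρ' ∈ J, IsValidRuloid rul Q ρ') ∧
      (∀ ρ' ∈ J,
        ρ'.act = ρ.act ∧
        R ρ.tgt ρ'.tgt ∧
        (ρ'.targetVars ∪ ρ.targetVars) ∩ (ρ.sourceVars ∪ ρ'.sourceVars) = ∅ ∧
        (∀ y ∈ ρ.targetVars ∩ ρ'.targetVars,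
          ∃ x, x ∈ ρ.sourceVars ∩ ρ'.sourceVars ∧
            ∃ b, (x, b, y) ∈ ρ.pos ∧ (x, b, y) ∈ ρ'.pos)) ∧
      (∀ σ, ClosedSub L.ops σ → HypsSat Tr σ ρ → ∃ ρ' ∈ J, HypsSat Tr σ ρ')

/-- Rule-matching bisimilarity. -/
def RMBisim (L : Lang Op ar Act) (Tr : Tm Op ar → Act → Tm Op ar → Prop)
    (rul : Tm Op ar → Set (Rule Op ar Act)) (P Q : Tm Op ar) : Prop :=
  ∃ R, IsRMBisim L Tr rul R ∧ R P Q

/-- Initial transition formulae: propositional logic over atoms `x →^a`. -/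
inductive TF (Act : Type) : Type
  | tru : TF Act
  | atom : ℕ → Act → TF Act
  | not : TF Act → TF Act
  | and : TF Act → TF Act → TF Act

/-- Satisfaction of an initial transition formula by a substitution. -/
def TF.Sat (Tr : Tm Op ar → Act → Tm Op ar → Prop) (σ : ℕ → Tm Op ar) :
    TF Act → Prop
  | .tru => True
  | .atom x a => ∃ q, Tr (σ x) a q
  | .not F => ¬ TF.Sat Tr σ F
  | .and F F' => TF.Sat Tr σ F ∧ TF.Sat Tr σ F'

/-- Semantic entailment `⊨ F ⇒ F'` over closed `S`-substitutions. -/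
def Entails (S : Set Op) (Tr : Tm Op ar → Act → Tm Op ar → Prop)
    (F F' : TF Act) : Prop :=
  ∀ σ, ClosedSub S σ → TF.Sat Tr σ F → TF.Sat Tr σ F'

/-- `L'` (over operations `Op'`) is a disjoint extension of `L` (over `Op`),
along the arity-preserving injection `ι`: the signature and rules of `L'`
include those of `L`, and `L'` has no new rules for the operations of `L`. -/
def IsDisjointExtension {Op' : Type} {ar' : Op' → ℕ} (ι : Op → Op')
    (h : ∀ f, ar' (ι f) = ar f) (L' : Lang Op' ar' Act) (L : Lang Op ar Act) : Prop :=
  Function.Injective ι ∧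
  (∀ f ∈ L.ops, ι f ∈ L'.ops) ∧
  (∀ ρ ∈ L.rules, ρ.map ι h ∈ L'.rules) ∧
  (∀ ρ' ∈ L'.rules, (∃ f ∈ L.ops, ρ'.PrincipalIs (ι f)) → ∃ ρ ∈ L.rules, ρ' = ρ.map ι h)

/-- The term `f(t, u)` for a binary operation symbol `f`. -/
def binT (f : Op) (t u : Tm Op ar) : Tm Op ar :=
  Tm.app f fun i => if (i : ℕ) = 0 then t else u

/-- The term `f` for a constant symbol `f`. -/
def constT (f : Op) : Tm Op ar := Tm.app f fun _ => Tm.var 0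

/-- The term `f(t)` for a unary operation symbol `f`. -/
def unT (f : Op) (t : Tm Op ar) : Tm Op ar := Tm.app f fun _ => t

/-!
An initial transition formula only sees the sets of initials of the terms substituted for its
variables. Every set of actions is the set of initials of a closed `G`-term, so a
`G'`-substitution can be traded for a `G`-substitution with the same initials. Conversely, a
closed `G`-term has the same initials in `G'` as in `G`: by induction on the term, since in a
disjoint extension the rules for its head operation are exactly those of `G`, and the premises
of a GSOS rule only ask for initials of the arguments.
-/

namespace Tm

variable {Op' : Type} {ar' : Op' → ℕ}

lemma not_isClosed_var (x : ℕ) : ¬ (var x : Tm Op ar).IsClosed := by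
  simp [IsClosed, vars]

lemma isClosed_app_iff {f : Op} {ts : Fin (ar f) → Tm Op ar} :
    (app f ts).IsClosed ↔ ∀ i, (ts i).IsClosed := by
  simp [IsClosed, vars]

lemma ops_app_subset_iff {S : Set Op} {f : Op} {ts : Fin (ar f) → Tm Op ar} :
    (app f ts).ops ⊆ S ↔ f ∈ S ∧ ∀ i, (ts i).ops ⊆ S := by
  simp [ops, Set.insert_subset_iff]

lemma isClosed_subst {σ : ℕ → Tm Op ar} (hσ : ∀ x, (σ x).IsClosed) (t : Tm Op ar) :
    (t.subst σ).IsClosed := by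
  induction t with
  | var x => exact hσ x
  | app f ts ih => exact isClosed_app_iff.2 ih

lemma ops_subst_subset {S : Set Op} {σ : ℕ → Tm Op ar} (hσ : ∀ x, (σ x).ops ⊆ S)
    {t : Tm Op ar} (ht : t.ops ⊆ S) : (t.subst σ).ops ⊆ S := by
  induction t with
  | var x => exact hσ x
  | app f ts ih =>
    obtain ⟨hf, hts⟩ := ops_app_subset_iff.1 ht
    exact ops_app_subset_iff.2 ⟨hf, fun i => ih i (hts i)⟩

lemma subst_congr {σ τ : ℕ → Tm Op ar} {t : Tm Op ar} (hστ : ∀ x ∈ t.vars, σ x = τ x) :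
    t.subst σ = t.subst τ := by
  induction t with
  | var x => exact hστ x rfl
  | app f ts ih =>
    exact congrArg (app f) <| funext fun i =>
      ih i fun x hx => hστ x (Set.mem_iUnion.2 ⟨i, hx⟩)

lemma vars_map (ι : Op → Op') (h : ∀ f, ar' (ι f) = ar f) (t : Tm Op ar) :
    (t.map ι h).vars = t.vars := by
  induction t with
  | var x => rfl
  | app f ts ih =>
    simp only [map, vars, ih]
    exact (finCongr (h f)).surjective.iUnion_comp fun j => (ts j).vars

lemma ops_map (ι : Op → Op') (h : ∀ f, ar' (ι f) = ar f) (t : Tm Op ar) :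
    (t.map ι h).ops = ι '' t.ops := by
  induction t with
  | var x => simp [map, ops]
  | app f ts ih =>
    simp only [map, ops, ih, Set.image_insert_eq, ← Set.image_iUnion]
    congr 2
    exact (finCongr (h f)).surjective.iUnion_comp fun j => (ts j).ops

lemma map_subst (ι : Op → Op') (h : ∀ f, ar' (ι f) = ar f) (σ : ℕ → Tm Op ar)
    (t : Tm Op ar) : (t.subst σ).map ι h = (t.map ι h).subst fun x => (σ x).map ι h := by
  induction t with
  | var x => rfl
  | app f ts ih => exact congrArg (app (ι f)) <| funext fun i => ih _

lemma map_injective {ι : Op → Op'} (hι : Function.Injective ι) (h : ∀ f, ar' (ι f) = ar f) :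
    Function.Injective (map ι h : Tm Op ar → Tm Op' ar') := by
  intro t u htu
  induction t generalizing u with
  | var x => cases u <;> simp_all [map]
  | app f ts ih =>
    cases u with
    | var y => simp [map] at htu
    | app g us =>
      simp only [map, app.injEq] at htu
      obtain ⟨hfg, htus⟩ := htu
      obtain rfl := hι hfg
      congr 1
      funext j
      simpa using ih _ (congrFun (eq_of_heq htus) (Fin.cast (h f).symm j))

end Tm

variable {Op' : Type} {ar' : Op' → ℕ}

lemma ClosedSub.map {S : Set Op} {S' : Set Op'} {σ : ℕ → Tm Op ar} (hσ : ClosedSub S σ)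
    (ι : Op → Op') (h : ∀ f, ar' (ι f) = ar f) (hS : ∀ f ∈ S, ι f ∈ S') :
    ClosedSub S' fun x => (σ x).map ι h := fun x =>
  ⟨(Tm.vars_map ι h _).trans (hσ x).1,
    (Tm.ops_map ι h _).symm ▸ Set.image_subset_iff.2 fun _ hf => hS _ ((hσ x).2 hf)⟩

def init (Tr : Tm Op ar → Act → Tm Op ar → Prop) (p : Tm Op ar) : Set Act :=
  {a | ∃ q, Tr p a q}

lemma TF.sat_congr {Tr : Tm Op ar → Act → Tm Op ar → Prop}
    {Tr' : Tm Op' ar' → Act → Tm Op' ar' → Prop} {σ : ℕ → Tm Op ar} {σ' : ℕ → Tm Op' ar'}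
    (hσσ' : ∀ x, init Tr (σ x) = init Tr' (σ' x)) (F : TF Act) :
    TF.Sat Tr σ F ↔ TF.Sat Tr' σ' F := by
  induction F with
  | tru => rfl
  | atom x a => exact Set.ext_iff.1 (hσσ' x) a
  | not F ih => exact not_congr ih
  | and F G ihF ihG => exact and_congr ihF ihG

namespace Rule

variable {ρ : Rule Op ar Act} {σ : ℕ → Tm Op ar} {f : Op} {ts : Fin (ar f) → Tm Op ar}

lemma sourceVars_map (ι : Op → Op') (h : ∀ f, ar' (ι f) = ar f) :
    (ρ.map ι h).sourceVars = ρ.sourceVars :=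
  Tm.vars_map ι h ρ.src

lemma IsGSOSForm.principalIs_of_subst_eq (hρ : ρ.IsGSOSForm)
    (hsrc : ρ.src.subst σ = .app f ts) : ρ.PrincipalIs f := by
  obtain ⟨-, g, xs, -, hsrcρ⟩ := hρ
  rw [hsrcρ] at hsrc
  injection hsrc with hgf
  subst hgf
  exact ⟨_, hsrcρ⟩

lemma IsGSOSForm.exists_eq_arg_of_subst_eq (hρ : ρ.IsGSOSForm)
    (hsrc : ρ.src.subst σ = .app f ts) {x : ℕ} (hx : x ∈ ρ.sourceVars) :
    ∃ i, σ x = ts i := by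
  obtain ⟨-, g, xs, -, hsrcρ⟩ := hρ
  rw [sourceVars, hsrcρ] at hx
  obtain ⟨i, rfl⟩ : ∃ i, xs i = x := by simpa [Tm.vars] using hx
  rw [hsrcρ] at hsrc
  injection hsrc with hgf hσts
  subst hgf
  exact ⟨i, congrFun (eq_of_heq hσts) i⟩

/-- Only the initials of the source variables matter: the target variables are fresh, so
each can be sent to some derivative witnessing its unique positive premise. -/
lemma exists_tr_of_hypsSat {S : Set Op} {Tr : Tm Op ar → Act → Tm Op ar → Prop}
    (hWF : ρ.WF) (hsound : ρ.Sound Tr S)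
    (hTr : ∀ p a q, Tr p a q → q.IsClosed ∧ q.ops ⊆ S)
    (hσ : ClosedSub S σ) (hsat : HypsSat Tr σ ρ) :
    ∃ q, Tr (ρ.src.subst σ) ρ.act q := by
  obtain ⟨-, -, hpos, hneg, hpos_unique, -⟩ := hWF
  have hσ' : ∀ z, ∃ t : Tm Op ar, (t.IsClosed ∧ t.ops ⊆ S) ∧
      (z ∈ ρ.sourceVars → t = σ z) ∧ ∀ x b, (x, b, z) ∈ ρ.pos → Tr (σ x) b t := by
    intro z
    by_cases hz : ∃ x b, (x, b, z) ∈ ρ.pos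
    · obtain ⟨x, b, hxbz⟩ := hz
      obtain ⟨q, hq⟩ := hsat.1 hxbz
      refine ⟨q, hTr _ _ _ hq, fun hzs => absurd hzs (hpos hxbz).2, fun x' b' hx'b'z => ?_⟩
      obtain ⟨rfl, rfl⟩ := hpos_unique hx'b'z hxbz
      exact hq
    · exact ⟨σ z, hσ z, fun _ => rfl, fun x b hxbz => absurd ⟨x, b, hxbz⟩ hz⟩
  choose σ' hσ'S hσ'src hσ'pos using hσ'
  have hsrc : ρ.src.subst σ' = ρ.src.subst σ := Tm.subst_congr hσ'src
  refine ⟨_, hsrc ▸ hsound σ' hσ'S ⟨fun x b y hxby => ?_, fun x b hxb => ?_⟩⟩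
  · rw [hσ'src x (hpos hxby).1]
    exact hσ'pos y x b hxby
  · rw [hσ'src x (hneg hxb)]
    exact hsat.2 hxb

lemma hypsSat_map_iff (hWF : ρ.WF) {Tr : Tm Op ar → Act → Tm Op ar → Prop}
    {Tr' : Tm Op' ar' → Act → Tm Op' ar' → Prop} (ι : Op → Op') (h : ∀ f, ar' (ι f) = ar f)
    {σ' : ℕ → Tm Op' ar'} (hσσ' : ∀ x ∈ ρ.sourceVars, init Tr' (σ' x) = init Tr (σ x)) :
    HypsSat Tr' σ' (ρ.map ι h) ↔ HypsSat Tr σ ρ := by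
  obtain ⟨-, -, hpos, hneg, -⟩ := hWF
  refine and_congr (forall₃_congr fun x b y => forall_congr' fun hxby => ?_)
    (forall₂_congr fun x b => forall_congr' fun hxb => ?_)
  · exact Set.ext_iff.1 (hσσ' x (hpos hxby).1) b
  · have := not_congr (Set.ext_iff.1 (hσσ' x (hneg hxb)) b)
    simpa only [init, Set.mem_ofPred_eq, not_exists] using this

end Rule

lemma IsTransRel.closed_target {L : Lang Op ar Act} (hL : L.WellFormed)
    {Tr : Tm Op ar → Act → Tm Op ar → Prop} (hTr : IsTransRel L Tr) :
    ∀ p a q, Tr p a q → q.IsClosed ∧ q.ops ⊆ L.ops := by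
  intro p a q hq
  obtain ⟨ρ, hρ, σ, hσ, -, -, -, rfl⟩ := hTr.2 p a q hq
  exact ⟨Tm.isClosed_subst (fun x => (hσ x).1) _,
    Tm.ops_subst_subset (fun x => (hσ x).2) (hL.2.2 ρ hρ).2.2⟩

section DisjointExtension

variable {L : Lang Op ar Act} {Tr : Tm Op ar → Act → Tm Op ar → Prop}
  {L' : Lang Op' ar' Act} {Tr' : Tm Op' ar' → Act → Tm Op' ar' → Prop}
  {ι : Op → Op'} {h : ∀ f, ar' (ι f) = ar f}
  {f : Op} {ts : Fin (ar f) → Tm Op ar}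

/-- A rule of `L` deriving a transition of `f(ts)` is also a rule of `L'`, and its hypotheses
only concern the initials of the `ts i`. -/
lemma init_app_subset_init_map (hL : L.WellFormed) (hTr : IsTransRel L Tr)
    (hL' : L'.WellFormed) (hTr' : IsTransRel L' Tr') (hext : IsDisjointExtension ι h L' L)
    (ih : ∀ i, init Tr' ((ts i).map ι h) = init Tr (ts i)) :
    init Tr (.app f ts) ⊆ init Tr' ((Tm.app f ts).map ι h) := by
  rintro a ⟨q, hq⟩
  obtain ⟨ρ, hρ, σ, hσ, hsat, hsrc, rfl, -⟩ := hTr.2 _ _ _ hq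
  have hGSOS := (hL.2.2 ρ hρ).1
  have hσ' := hσ.map ι h hext.2.1
  have hsat' : HypsSat Tr' (fun x => (σ x).map ι h) (ρ.map ι h) := by
    refine (Rule.hypsSat_map_iff hGSOS.1 ι h fun x hx => ?_).2
      ⟨fun _ _ _ hp => ⟨_, hsat.1 hp⟩, hsat.2⟩
    obtain ⟨i, hi⟩ := hGSOS.exists_eq_arg_of_subst_eq hsrc hx
    rw [hi, ih]
  have := Rule.exists_tr_of_hypsSat (hL'.2.2 _ (hext.2.2.1 ρ hρ)).1.1
    (hTr'.1 _ (hext.2.2.1 ρ hρ)) (hTr'.closed_target hL') hσ' hsat'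
  rwa [Rule.map, ← Tm.map_subst, hsrc] at this

/-- Since `L'` adds no rules for `ι f`, a transition of `f(ts)` in `L'` is derived by the
image of a rule `ρ` of `L`; pulling its substitution back along `ι` on the source variables
makes the hypotheses of `ρ` hold in `L`. -/
lemma init_map_subset_init_app (hL : L.WellFormed) (hTr : IsTransRel L Tr)
    (hL' : L'.WellFormed) (hTr' : IsTransRel L' Tr') (hext : IsDisjointExtension ι h L' L)
    (hf : f ∈ L.ops) (hts : ∀ i, (ts i).IsClosed ∧ (ts i).ops ⊆ L.ops)
    (ih : ∀ i, init Tr' ((ts i).map ι h) = init Tr (ts i)) :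
    init Tr' ((Tm.app f ts).map ι h) ⊆ init Tr (.app f ts) := by
  classical
  rintro a ⟨q', hq'⟩
  obtain ⟨ρ', hρ', σ', -, hsat', hsrc', rfl, -⟩ := hTr'.2 _ _ _ hq'
  have hGSOS' := (hL'.2.2 ρ' hρ').1
  obtain ⟨ρ, hρ, rfl⟩ :=
    hext.2.2.2 ρ' hρ' ⟨f, hf, hGSOS'.principalIs_of_subst_eq hsrc'⟩
  have hGSOS := (hL.2.2 ρ hρ).1
  have hσ'_arg : ∀ x ∈ ρ.sourceVars, ∃ j, σ' x = (ts j).map ι h := fun x hx => by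
    obtain ⟨i, hi⟩ :=
      hGSOS'.exists_eq_arg_of_subst_eq hsrc' ((Rule.sourceVars_map ι h).symm.subset hx)
    exact ⟨_, hi⟩
  let σ : ℕ → Tm Op ar := fun z =>
    if hz : ∃ j, σ' z = (ts j).map ι h then ts hz.choose else .app f ts
  have hσσ' : ∀ x ∈ ρ.sourceVars, σ' x = (σ x).map ι h := fun x hx => by
    simpa [σ, hσ'_arg x hx] using (hσ'_arg x hx).choose_spec
  have hσ : ClosedSub L.ops σ := fun z => by
    by_cases hz : ∃ j, σ' z = (ts j).map ι h
    · simpa [σ, hz] using hts hz.choose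
    · simpa [σ, hz, Tm.isClosed_app_iff, Tm.ops_app_subset_iff] using
        ⟨fun i => (hts i).1, hf, fun i => (hts i).2⟩
  have hsat : HypsSat Tr σ ρ := by
    refine (Rule.hypsSat_map_iff hGSOS.1 ι h fun x hx => ?_).1
      ⟨fun _ _ _ hp => ⟨_, hsat'.1 hp⟩, hsat'.2⟩
    obtain ⟨j, hj⟩ := hσ'_arg x hx
    rw [hj, ih, ← Tm.map_injective hext.1 h ((hσσ' x hx).symm.trans hj)]
  have hsrc : ρ.src.subst σ = .app f ts := by
    refine Tm.map_injective hext.1 h ?_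
    rw [Tm.map_subst, ← hsrc', Rule.map]
    exact (Tm.subst_congr fun x hx => hσσ' x ((Rule.sourceVars_map ι h).subset hx)).symm
  obtain ⟨q, hq⟩ := Rule.exists_tr_of_hypsSat hGSOS.1 (hTr.1 ρ hρ) (hTr.closed_target hL) hσ hsat
  exact ⟨q, hsrc ▸ hq⟩

theorem init_map (hL : L.WellFormed) (hTr : IsTransRel L Tr) (hL' : L'.WellFormed)
    (hTr' : IsTransRel L' Tr') (hext : IsDisjointExtension ι h L' L) {p : Tm Op ar}
    (hp : p.IsClosed) (hpL : p.ops ⊆ L.ops) : init Tr' (p.map ι h) = init Tr p := by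
  induction p with
  | var x => exact absurd hp (Tm.not_isClosed_var x)
  | app f ts ih =>
    obtain ⟨hf, htsL⟩ := Tm.ops_app_subset_iff.1 hpL
    have hts i : (ts i).IsClosed ∧ (ts i).ops ⊆ L.ops := ⟨Tm.isClosed_app_iff.1 hp i, htsL i⟩
    have ih i := ih i (hts i).1 (hts i).2
    exact (init_map_subset_init_app hL hTr hL' hTr' hext hf hts ih).antisymm
      (init_app_subset_init_map hL hTr hL' hTr' hext ih)

end DisjointExtension

theorem entails_disjoint_extension_invariant_general
    {Op Op' : Type} {ar : Op → ℕ} {ar' : Op' → ℕ} {Act : Type}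
    (L : Lang Op ar Act) (hL : L.WellFormed)
    (Tr : Tm Op ar → Act → Tm Op ar → Prop) (hTr : IsTransRel L Tr)
    (hinit : ∀ A : Set Act, ∃ p : Tm Op ar, p.IsClosed ∧ p.ops ⊆ L.ops ∧
      ∀ a, (∃ q, Tr p a q) ↔ a ∈ A)
    (L' : Lang Op' ar' Act) (hL' : L'.WellFormed)
    (ι : Op → Op') (h : ∀ f, ar' (ι f) = ar f)
    (hext : IsDisjointExtension ι h L' L)
    (Tr' : Tm Op' ar' → Act → Tm Op' ar' → Prop) (hTr' : IsTransRel L' Tr')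
    (F F' : TF Act) :
    Entails L.ops Tr F F' ↔ Entails L'.ops Tr' F F' := by
  constructor
  · intro hE σ' _ hF
    choose σ hσ using fun x => hinit (init Tr' (σ' x))
    have hσσ' x : init Tr (σ x) = init Tr' (σ' x) := Set.ext (hσ x).2.2
    exact (TF.sat_congr hσσ' F').1
      (hE σ (fun x => ⟨(hσ x).1, (hσ x).2.1⟩) ((TF.sat_congr hσσ' F).2 hF))
  · intro hE σ hσ hF
    have hσσ' x : init Tr (σ x) = init Tr' ((σ x).map ι h) :=
      (init_map hL hTr hL' hTr' hext (hσ x).1 (hσ x).2).symm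
    exact (TF.sat_congr hσσ' F').2
      (hE _ (hσ.map ι h hext.2.1) ((TF.sat_congr hσσ' F).1 hF))

/-- if `init(closed(Σ_G)) = 2^Act` and `G'` is a disjoint
extension of `G`, then semantic entailment between initial transition
formulae is the same in `G` and in `G'`. -/
theorem entails_disjoint_extension_invariant
    {Op Op' : Type} {ar : Op → ℕ} {ar' : Op' → ℕ} {Act : Type}
    [Finite Act] [Nonempty Act]
    (L : Lang Op ar Act) (hL : L.WellFormed)
    (Tr : Tm Op ar → Act → Tm Op ar → Prop) (hTr : IsTransRel L Tr)
    (hinit : ∀ A : Set Act, ∃ p : Tm Op ar, p.IsClosed ∧ p.ops ⊆ L.ops ∧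
      ∀ a, (∃ q, Tr p a q) ↔ a ∈ A)
    (L' : Lang Op' ar' Act) (hL' : L'.WellFormed)
    (ι : Op → Op') (h : ∀ f, ar' (ι f) = ar f)
    (hext : IsDisjointExtension ι h L' L)
    (Tr' : Tm Op' ar' → Act → Tm Op' ar' → Prop) (hTr' : IsTransRel L' Tr')
    (F F' : TF Act) :
    Entails L.ops Tr F F' ↔ Entails L'.ops Tr' F F' :=
  entails_disjoint_extension_invariant_general L hL Tr hTr hinit L' hL' ι h hext Tr' hTr' F F'

end GSOSPaper
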